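/- Let G be a finite group, m > 1, S the subset of G^m consisting of all elements x_{[k,l)} with x ≠ e and 1 ≤ k < l ≤ m+1. For h ∈ G with h ≠ e and 1 ≤ i < j ≤ m+1, and a fixed element x_{[k,l)} ∈ S, the product h_{[i,j)} · x_{[k,l)} belongs to S if and only if one of the following holds: (1) h ≠ x^{-1} and (i,j) = (k,l); (2) h = x and (j = k or i = l); (3) h = x^{-1} and ((i ≠ k and j = l) or (i = k and j ≠ l)). -/
import Mathlib


namespace CayleyStmt1

variable {G : Type*}

def intvl [Group G] (m : ℕ) (x : G) (k l : ℕ) : Fin m → G :=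
  fun i => if k ≤ i.1 + 1 ∧ i.1 + 1 < l then x else 1

def cS (G : Type*) [Group G] (m : ℕ) : Set (Fin m → G) :=
  {v | ∃ (x : G) (k l : ℕ), x ≠ 1 ∧ 1 ≤ k ∧ k < l ∧ l ≤ m + 1 ∧ v = intvl m x k l}

private lemma force [Group G] {g y : G} (hg : g ≠ 1) {c : Prop} [Decidable c]
    (e : g = if c then y else 1) : c ∧ g = y := by
  by_cases hc : c
  · rw [if_pos hc] at e; exact ⟨hc, e⟩
  · rw [if_neg hc] at e; exact absurd e hg

private lemma key [Group G] {m : ℕ} {h x y : G} {i j k l a b : ℕ}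
    (hv : intvl m h i j * intvl m x k l = intvl m y a b)
    (t : ℕ) (h1 : 1 ≤ t) (h2 : t ≤ m) :
    (if i ≤ t ∧ t < j then h else 1) * (if k ≤ t ∧ t < l then x else 1)
      = if a ≤ t ∧ t < b then y else 1 := by
  have := congrFun hv ⟨t - 1, by omega⟩
  simp only [Pi.mul_apply, intvl, Nat.sub_add_cancel h1] at this
  exact this

private lemma fTF [Group G] {g1 g2 y : G} {p q c : Prop}
    [Decidable p] [Decidable q] [Decidable c]
    (e : (if p then g1 else 1) * (if q then g2 else 1) = if c then y else 1)
    (hp : p) (hq : ¬ q) (hg : g1 ≠ 1) : c ∧ g1 = y := by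
  rw [if_pos hp, if_neg hq, mul_one] at e; exact force hg e

private lemma fFT [Group G] {g1 g2 y : G} {p q c : Prop}
    [Decidable p] [Decidable q] [Decidable c]
    (e : (if p then g1 else 1) * (if q then g2 else 1) = if c then y else 1)
    (hp : ¬ p) (hq : q) (hg : g2 ≠ 1) : c ∧ g2 = y := by
  rw [if_neg hp, if_pos hq, one_mul] at e; exact force hg e

private lemma fTT [Group G] {g1 g2 y : G} {p q c : Prop}
    [Decidable p] [Decidable q] [Decidable c]
    (e : (if p then g1 else 1) * (if q then g2 else 1) = if c then y else 1)
    (hp : p) (hq : q) (hg : g1 * g2 ≠ 1) : c ∧ g1 * g2 = y := by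
  rw [if_pos hp, if_pos hq] at e; exact force hg e

private lemma fFF [Group G] {g1 g2 y : G} {p q c : Prop}
    [Decidable p] [Decidable q] [Decidable c]
    (e : (if p then g1 else 1) * (if q then g2 else 1) = if c then y else 1)
    (hp : ¬ p) (hq : ¬ q) (hc : c) : y = 1 := by
  rw [if_neg hp, if_neg hq, mul_one, if_pos hc] at e; exact e.symm

private lemma fTT1 [Group G] {g1 g2 y : G} {p q c : Prop}
    [Decidable p] [Decidable q] [Decidable c]
    (e : (if p then g1 else 1) * (if q then g2 else 1) = if c then y else 1)
    (hp : p) (hq : q) (h1 : g1 * g2 = 1) (hc : c) : y = 1 := by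
  rw [if_pos hp, if_pos hq, h1, if_pos hc] at e; exact e.symm

/-- For `x_{[k,l)} ∈ S` and `h ≠ e`, `1 ≤ i < j ≤ m+1`, the product
`h_{[i,j)} · x_{[k,l)}` lies in `S` iff one of the three listed conditions holds. -/
theorem prod_mem_S_iff [Group G] [Fintype G] (m : ℕ) (hm : 1 < m)
    (x : G) (hx : x ≠ 1) (k l : ℕ) (hk : 1 ≤ k) (hkl : k < l) (hl : l ≤ m + 1)
    (h : G) (hh : h ≠ 1) (i j : ℕ) (hi : 1 ≤ i) (hij : i < j) (hj : j ≤ m + 1) :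
    intvl m h i j * intvl m x k l ∈ cS G m ↔
      ((h ≠ x⁻¹ ∧ i = k ∧ j = l) ∨
       (h = x ∧ (j = k ∨ i = l)) ∨
       (h = x⁻¹ ∧ ((i ≠ k ∧ j = l) ∨ (i = k ∧ j ≠ l)))) := by
  constructor
  · rintro ⟨y, a, b, hy, ha, hab, hb, hv⟩
    by_contra hC
    have E := key hv
    rcases Nat.lt_trichotomy i k with hik | hik | hik <;>
      rcases Nat.lt_trichotomy j l with hjl | hjl | hjl
    · -- i < k, j < l
      rcases Nat.lt_trichotomy j k with h1 | h1 | h1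
      · -- disjoint with gap
        have ci := (fTF (E i (by omega) (by omega)) (by omega) (by omega) hh).1
        have ck := (fFT (E k (by omega) (by omega)) (by omega) (by omega) hx).1
        exact hy (fFF (E j (by omega) (by omega)) (by omega) (by omega) (by omega))
      · -- adjacent: j = k
        obtain ⟨ci, ei⟩ := fTF (E i (by omega) (by omega)) (by omega) (by omega) hh
        obtain ⟨ck, ek⟩ := fFT (E k (by omega) (by omega)) (by omega) (by omega) hx
        exact hC (Or.inr (Or.inl ⟨ei.trans ek.symm, Or.inl h1⟩))
      · -- overlap: i < k < j < l
        by_cases hP : h * x = 1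
        · have ci := (fTF (E i (by omega) (by omega)) (by omega) (by omega) hh).1
          have cj := (fFT (E j (by omega) (by omega)) (by omega) (by omega) hx).1
          exact hy (fTT1 (E k (by omega) (by omega)) (by omega) (by omega) hP (by omega))
        · obtain ⟨ci, ei⟩ := fTF (E i (by omega) (by omega)) (by omega) (by omega) hh
          obtain ⟨ck, ek⟩ := fTT (E k (by omega) (by omega)) (by omega) (by omega) hP
          exact hx (mul_left_cancel (show h * x = h * 1 by rw [mul_one, ek, ei]))
    · -- i < k, j = l
      by_cases hxi : h = x⁻¹
      · exact hC (Or.inr (Or.inr ⟨hxi, Or.inl ⟨by omega, hjl⟩⟩))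
      · have hP : h * x ≠ 1 := fun e => hxi (eq_inv_of_mul_eq_one_left e)
        obtain ⟨ci, ei⟩ := fTF (E i (by omega) (by omega)) (by omega) (by omega) hh
        obtain ⟨ck, ek⟩ := fTT (E k (by omega) (by omega)) (by omega) (by omega) hP
        exact hx (mul_left_cancel (show h * x = h * 1 by rw [mul_one, ek, ei]))
    · -- i < k, l < j  (containment)
      by_cases hP : h * x = 1
      · have ci := (fTF (E i (by omega) (by omega)) (by omega) (by omega) hh).1
        have cl := (fTF (E l (by omega) (by omega)) (by omega) (by omega) hh).1
        exact hy (fTT1 (E k (by omega) (by omega)) (by omega) (by omega) hP (by omega))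
      · obtain ⟨ci, ei⟩ := fTF (E i (by omega) (by omega)) (by omega) (by omega) hh
        obtain ⟨ck, ek⟩ := fTT (E k (by omega) (by omega)) (by omega) (by omega) hP
        exact hx (mul_left_cancel (show h * x = h * 1 by rw [mul_one, ek, ei]))
    · -- i = k, j < l
      by_cases hxi : h = x⁻¹
      · exact hC (Or.inr (Or.inr ⟨hxi, Or.inr ⟨hik, by omega⟩⟩))
      · have hP : h * x ≠ 1 := fun e => hxi (eq_inv_of_mul_eq_one_left e)
        obtain ⟨ci, ei⟩ := fTT (E i (by omega) (by omega)) (by omega) (by omega) hP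
        obtain ⟨cj, ej⟩ := fFT (E j (by omega) (by omega)) (by omega) (by omega) hx
        exact hh (mul_right_cancel (show h * x = 1 * x by rw [one_mul, ei, ej]))
    · -- i = k, j = l
      subst hik; subst hjl
      by_cases hxi : h = x⁻¹
      · have Ea := E a (by omega) (by omega)
        by_cases hca : i ≤ a ∧ a < j
        · rw [if_pos hca, if_pos hca, hxi, inv_mul_cancel x, if_pos (show a ≤ a ∧ a < b by omega)] at Ea
          exact hy Ea.symm
        · rw [if_neg hca, if_neg hca, mul_one, if_pos (show a ≤ a ∧ a < b by omega)] at Ea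
          exact hy Ea.symm
      · exact hC (Or.inl ⟨hxi, rfl, rfl⟩)
    · -- i = k, l < j
      by_cases hxi : h = x⁻¹
      · exact hC (Or.inr (Or.inr ⟨hxi, Or.inr ⟨hik, by omega⟩⟩))
      · have hP : h * x ≠ 1 := fun e => hxi (eq_inv_of_mul_eq_one_left e)
        obtain ⟨ci, ei⟩ := fTT (E i (by omega) (by omega)) (by omega) (by omega) hP
        obtain ⟨cl, el⟩ := fTF (E l (by omega) (by omega)) (by omega) (by omega) hh
        exact hx (mul_left_cancel (show h * x = h * 1 by rw [mul_one, ei, el]))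
    · -- k < i, j < l  (containment)
      by_cases hP : h * x = 1
      · have ck := (fFT (E k (by omega) (by omega)) (by omega) (by omega) hx).1
        have cj := (fFT (E j (by omega) (by omega)) (by omega) (by omega) hx).1
        exact hy (fTT1 (E i (by omega) (by omega)) (by omega) (by omega) hP (by omega))
      · obtain ⟨ck, ek⟩ := fFT (E k (by omega) (by omega)) (by omega) (by omega) hx
        obtain ⟨ci, ei⟩ := fTT (E i (by omega) (by omega)) (by omega) (by omega) hP
        exact hh (mul_right_cancel (show h * x = 1 * x by rw [one_mul, ei, ek]))
    · -- k < i, j = l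
      by_cases hxi : h = x⁻¹
      · exact hC (Or.inr (Or.inr ⟨hxi, Or.inl ⟨by omega, hjl⟩⟩))
      · have hP : h * x ≠ 1 := fun e => hxi (eq_inv_of_mul_eq_one_left e)
        obtain ⟨ck, ek⟩ := fFT (E k (by omega) (by omega)) (by omega) (by omega) hx
        obtain ⟨ci, ei⟩ := fTT (E i (by omega) (by omega)) (by omega) (by omega) hP
        exact hh (mul_right_cancel (show h * x = 1 * x by rw [one_mul, ei, ek]))
    · -- k < i, l < j
      rcases Nat.lt_trichotomy i l with h1 | h1 | h1
      · -- overlap: k < i < l < j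
        by_cases hP : h * x = 1
        · have ck := (fFT (E k (by omega) (by omega)) (by omega) (by omega) hx).1
          have cl := (fTF (E l (by omega) (by omega)) (by omega) (by omega) hh).1
          exact hy (fTT1 (E i (by omega) (by omega)) (by omega) (by omega) hP (by omega))
        · obtain ⟨ck, ek⟩ := fFT (E k (by omega) (by omega)) (by omega) (by omega) hx
          obtain ⟨ci, ei⟩ := fTT (E i (by omega) (by omega)) (by omega) (by omega) hP
          exact hh (mul_right_cancel (show h * x = 1 * x by rw [one_mul, ei, ek]))
      · -- adjacent: i = l
        obtain ⟨ck, ek⟩ := fFT (E k (by omega) (by omega)) (by omega) (by omega) hx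
        obtain ⟨ci, ei⟩ := fTF (E i (by omega) (by omega)) (by omega) (by omega) hh
        exact hC (Or.inr (Or.inl ⟨ei.trans ek.symm, Or.inr h1⟩))
      · -- disjoint with gap
        have ck := (fFT (E k (by omega) (by omega)) (by omega) (by omega) hx).1
        have ci := (fTF (E i (by omega) (by omega)) (by omega) (by omega) hh).1
        exact hy (fFF (E l (by omega) (by omega)) (by omega) (by omega) (by omega))
  · rintro (⟨hne, rfl, rfl⟩ | ⟨rfl, hjk | hil⟩ | ⟨rfl, ⟨hik, rfl⟩ | ⟨rfl, hjl⟩⟩)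
    · exact ⟨h * x, i, j, fun e => hne (eq_inv_of_mul_eq_one_left e), hi, hij, hj, by
        funext t; simp only [Pi.mul_apply, intvl]
        split_ifs <;> first | (exfalso; omega) | simp⟩
    · subst hjk
      exact ⟨h, i, l, hx, hi, by omega, hl, by
        funext t; simp only [Pi.mul_apply, intvl]
        split_ifs <;> first | (exfalso; omega) | simp⟩
    · subst hil
      exact ⟨h, k, j, hx, hk, by omega, hj, by
        funext t; simp only [Pi.mul_apply, intvl]
        split_ifs <;> first | (exfalso; omega) | simp⟩
    · rcases lt_or_gt_of_ne hik with hc | hc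
      · exact ⟨x⁻¹, i, k, inv_ne_one.mpr hx, hi, hc, by omega, by
          funext t; simp only [Pi.mul_apply, intvl]
          split_ifs <;> first | (exfalso; omega) | simp⟩
      · exact ⟨x, k, i, hx, hk, hc, by omega, by
          funext t; simp only [Pi.mul_apply, intvl]
          split_ifs <;> first | (exfalso; omega) | simp⟩
    · rcases lt_or_gt_of_ne hjl with hc | hc
      · exact ⟨x, j, l, hx, by omega, hc, hl, by
          funext t; simp only [Pi.mul_apply, intvl]
          split_ifs <;> first | (exfalso; omega) | simp⟩
      · exact ⟨x⁻¹, l, j, inv_ne_one.mpr hx, by omega, hc, hj, by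
          funext t; simp only [Pi.mul_apply, intvl]
          split_ifs <;> first | (exfalso; omega) | simp⟩

end CayleyStmt1
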